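/- Let A be a real n×n matrix and consider the Sylvester operator on the real vector space of symmetric n×n matrices, X ↦ AX + XAᵀ (this space is invariant under the operator). Then: (i) if every complex eigenvalue of A has negative real part, this linear operator is bijective; and (ii) if A has a complex eigenvalue with zero real part, this linear operator is not injective, i.e., there exists a nonzero symmetric X with AX + XAᵀ = 0. Consequently, the determinant of the Sylvester operator restricted to symmetric matrices is a guardian map for Hurwitz stability. -/

import Mathlib

/-! If every eigenvalue of `A` has negative real part, `χ_A` and `χ_{-Aᵀ}` have no common root,
hence are coprime. A solution of `A X = X (-Aᵀ)` satisfies `X χ_A(-Aᵀ) = χ_A(A) X = 0`, and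
`χ_A(-Aᵀ)` is invertible by coprimality, so `X = 0`. The operator is thus bijective on all
matrices, and the preimage of a symmetric matrix is symmetric because the operator commutes
with transposition. If instead `A v = z v` with `v ≠ 0` and `Re z = 0`, then `X = Re (v v*)` is
a nonzero symmetric matrix with `A X + X Aᵀ = 2 Re z • X = 0`. -/

open Matrix Polynomial

namespace Matrix

variable {l m n R : Type*}

section CommRing

variable [Fintype m] [Fintype n] [DecidableEq m] [DecidableEq n] [CommRing R]

def sylvesterMap (A : Matrix n n R) : Matrix n n R →ₗ[R] Matrix n n R :=
  LinearMap.mulLeft R A + LinearMap.mulRight R Aᵀ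

@[simp]
lemma sylvesterMap_apply (A X : Matrix n n R) : sylvesterMap A X = A * X + X * Aᵀ := rfl

lemma sylvesterMap_transpose (A X : Matrix n n R) :
    sylvesterMap A Xᵀ = (sylvesterMap A X)ᵀ := by
  simp only [sylvesterMap_apply, transpose_add, transpose_mul, transpose_transpose, add_comm]

lemma aeval_mul_eq_mul_aeval {A : Matrix m m R} {B : Matrix n n R} {X : Matrix m n R}
    (h : A * X = X * B) (p : R[X]) : aeval A p * X = X * aeval B p := by
  induction p using Polynomial.induction_on' with
  | add p q hp hq => simp only [map_add, Matrix.add_mul, Matrix.mul_add, hp, hq]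
  | monomial k a =>
    have hpow : A ^ k * X = X * B ^ k := by
      induction k with
      | zero => simp
      | succ k ih =>
        rw [pow_succ, pow_succ, Matrix.mul_assoc, h, ← Matrix.mul_assoc, ih, Matrix.mul_assoc]
    simp only [aeval_monomial, ← Algebra.smul_def, Matrix.smul_mul, hpow, Matrix.mul_smul]

theorem eq_zero_of_mul_eq_mul_of_isCoprime_charpoly {A : Matrix m m R} {B : Matrix n n R}
    {X : Matrix m n R} (hAB : IsCoprime A.charpoly B.charpoly) (h : A * X = X * B) : X = 0 := by
  obtain ⟨u, v, huv⟩ := hAB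
  have hXp : X * aeval B A.charpoly = 0 := by
    rw [← aeval_mul_eq_mul_aeval h, aeval_self_charpoly, Matrix.zero_mul]
  calc X = X * aeval B (A.charpoly * u + B.charpoly * v) := by
        rw [mul_comm A.charpoly, mul_comm B.charpoly, huv, map_one, Matrix.mul_one]
    _ = X * aeval B A.charpoly * aeval B u + X * aeval B B.charpoly * aeval B v := by
        simp only [map_add, map_mul, Matrix.mul_add, Matrix.mul_assoc]
    _ = 0 := by rw [hXp, aeval_self_charpoly]; simp

lemma eval_charpoly_neg_transpose (M : Matrix n n R) (a : R) :
    (-Mᵀ).charpoly.eval a = (-1) ^ Fintype.card n * M.charpoly.eval (-a) := by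
  have : scalar n (-a) - M = -(scalar n a - -Mᵀ)ᵀ := by
    simp only [map_neg, transpose_sub, transpose_neg, transpose_transpose, scalar_apply,
      diagonal_transpose]
    abel
  rw [eval_charpoly, eval_charpoly, this, det_neg, det_transpose, ← mul_assoc, ← mul_pow,
    neg_one_mul, neg_neg, one_pow, one_mul]

lemma exists_mulVec_eq_smul_of_isRoot_charpoly {K : Type*} [Field K] {M : Matrix n n K} {z : K}
    (hz : M.charpoly.IsRoot z) : ∃ v ≠ 0, M *ᵥ v = z • v := by
  rw [← charpoly_toLin', ← Module.End.hasEigenvalue_iff_isRoot_charpoly] at hz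
  obtain ⟨v, hv⟩ := hz.exists_hasEigenvector
  exact ⟨v, hv.2, by simpa using hv.apply_eq_smul⟩

lemma isCoprime_charpoly_neg_transpose_of_forall_re_neg {A : Matrix n n ℝ}
    (hA : ∀ z : ℂ, (A.charpoly.map (algebraMap ℝ ℂ)).IsRoot z → z.re < 0) :
    IsCoprime A.charpoly (-Aᵀ).charpoly := by
  rw [isCoprime_iff_aeval_ne_zero_of_isAlgClosed ℝ ℂ]
  intro z
  by_contra! h
  simp only [← eval_map_algebraMap, ← charpoly_map] at h
  have hneg : (-Aᵀ).map (algebraMap ℝ ℂ) = -(A.map (algebraMap ℝ ℂ))ᵀ := by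
    ext i j
    simp
  rw [hneg, eval_charpoly_neg_transpose] at h
  have hz := hA z (by rw [IsRoot, ← charpoly_map]; exact h.1)
  have hmz := hA (-z) (by rw [IsRoot, ← charpoly_map]; simpa using h.2)
  rw [Complex.neg_re] at hmz
  linarith

lemma sylvesterMap_injective_of_forall_re_neg {A : Matrix n n ℝ}
    (hA : ∀ z : ℂ, (A.charpoly.map (algebraMap ℝ ℂ)).IsRoot z → z.re < 0) :
    Function.Injective (sylvesterMap A) := by
  refine (injective_iff_map_eq_zero _).mpr fun X hX => ?_
  refine eq_zero_of_mul_eq_mul_of_isCoprime_charpoly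
    (isCoprime_charpoly_neg_transpose_of_forall_re_neg hA) ?_
  rw [mul_neg, eq_neg_iff_add_eq_zero]
  exact hX

lemma exists_transpose_eq_sylvesterMap_eq {K : Type*} [Field K] {A : Matrix n n K}
    (hA : Function.Injective (sylvesterMap A)) {Y : Matrix n n K} (hY : Yᵀ = Y) :
    ∃ X, Xᵀ = X ∧ sylvesterMap A X = Y := by
  obtain ⟨X, hX⟩ := LinearMap.injective_iff_surjective.mp hA Y
  exact ⟨X, hA (by rw [sylvesterMap_transpose, hX, hY]), hX⟩

end CommRing

section Fintype

variable [Fintype m]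

lemma mul_map_re (A : Matrix l m ℝ) (V : Matrix m n ℂ) :
    A * V.map Complex.re = (A.map (algebraMap ℝ ℂ) * V).map Complex.re := by
  ext i j
  simp [mul_apply, Complex.re_sum]

lemma map_re_mul (V : Matrix l m ℂ) (A : Matrix m n ℝ) :
    V.map Complex.re * A = (V * A.map (algebraMap ℝ ℂ)).map Complex.re := by
  ext i j
  simp [mul_apply, Complex.re_sum]

end Fintype

lemma transpose_map_re_vecMulVec_star (v : n → ℂ) :
    ((vecMulVec v (star v)).map Complex.re)ᵀ = (vecMulVec v (star v)).map Complex.re := by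
  ext i j
  simp only [transpose_apply, map_apply, vecMulVec_apply, Pi.star_apply, RCLike.star_def,
    Complex.mul_re, Complex.conj_re, Complex.conj_im, mul_neg, sub_neg_eq_add]
  ring

lemma map_re_vecMulVec_star_ne_zero {v : n → ℂ} (hv : v ≠ 0) :
    (vecMulVec v (star v)).map Complex.re ≠ 0 := by
  obtain ⟨i, hi⟩ := Function.ne_iff.mp hv
  intro h
  exact hi (by simpa [vecMulVec_apply, Complex.mul_conj] using congrFun (congrFun h i) i)

variable [Fintype n] [DecidableEq n]

lemma sylvesterMap_map_re_vecMulVec_star {A : Matrix n n ℝ} {z : ℂ} {v : n → ℂ}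
    (hv : A.map (algebraMap ℝ ℂ) *ᵥ v = z • v) :
    sylvesterMap A ((vecMulVec v (star v)).map Complex.re) =
      (2 * z.re) • (vecMulVec v (star v)).map Complex.re := by
  set Ac := A.map (algebraMap ℝ ℂ)
  have hleft : Ac * vecMulVec v (star v) = z • vecMulVec v (star v) := by
    rw [mul_vecMulVec, hv, smul_vecMulVec]
  have hright : vecMulVec v (star v) * Acᵀ = star z • vecMulVec v (star v) := by
    have hAc : Acᵀ = Acᴴ := by
      ext i j
      simp [Ac]
    rw [vecMulVec_mul, hAc, ← star_mulVec, hv, star_smul, vecMulVec_smul]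
  rw [sylvesterMap_apply, mul_map_re, map_re_mul, transpose_map, hleft, hright]
  ext i j
  simp only [RCLike.star_def, add_apply, map_apply, smul_apply, smul_eq_mul, Complex.mul_re,
    Complex.conj_re, Complex.conj_im]
  ring

end Matrix

/-- The Sylvester operator `X ↦ AX + XAᵀ` on the space of symmetric matrices:
(i) if every complex eigenvalue of `A` has negative real part, it is bijective
(injective and surjective on symmetric matrices); (ii) if `A` has a complex
eigenvalue with zero real part, it is not injective: there is a nonzero
symmetric `X` with `AX + XAᵀ = 0`. -/
theorem sylvester_on_symmetric_guardian (n : ℕ) (A : Matrix (Fin n) (Fin n) ℝ) :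
    ((∀ z : ℂ, (A.charpoly.map (algebraMap ℝ ℂ)).IsRoot z → z.re < 0) →
      ((∀ X : Matrix (Fin n) (Fin n) ℝ, Xᵀ = X → A * X + X * Aᵀ = 0 → X = 0) ∧
        (∀ Y : Matrix (Fin n) (Fin n) ℝ, Yᵀ = Y →
          ∃ X : Matrix (Fin n) (Fin n) ℝ, Xᵀ = X ∧ A * X + X * Aᵀ = Y))) ∧
    ((∃ z : ℂ, (A.charpoly.map (algebraMap ℝ ℂ)).IsRoot z ∧ z.re = 0) →
      ∃ X : Matrix (Fin n) (Fin n) ℝ, X ≠ 0 ∧ Xᵀ = X ∧ A * X + X * Aᵀ = 0) := by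
  refine ⟨fun hA => ?_, fun ⟨z, hz, hzre⟩ => ?_⟩
  · have hinj := sylvesterMap_injective_of_forall_re_neg hA
    exact ⟨fun X _ hX => (injective_iff_map_eq_zero _).mp hinj X hX,
      fun Y hY => exists_transpose_eq_sylvesterMap_eq hinj hY⟩
  · rw [← charpoly_map] at hz
    obtain ⟨v, hv0, hv⟩ := exists_mulVec_eq_smul_of_isRoot_charpoly hz
    refine ⟨_, map_re_vecMulVec_star_ne_zero hv0, transpose_map_re_vecMulVec_star v, ?_⟩
    simpa [hzre] using sylvesterMap_map_re_vecMulVec_star hv
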